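/- arXiv:cs/0404050 — 4 statements merged into one kernel-verified Lean document; each statement's English description precedes it below -/
import Mathlib

section
/- Let Σ be a polymorphic signature and C a finite regular set of equational axioms over Σ (every axiom s ≈ t in C satisfies dvar(s) = dvar(t)). Then for any partial data terms s, t ∈ Term_{Σ⊥}(DVar): if s ⊒_C t and t is a total data term, then s is also a total data term and s ≈_C t. -/
namespace ACRWL

/-- Partial expressions: data variables, bottom, data constructor applications
and defined function applications (symbols named by natural numbers). -/
inductive Expr : Type where
  | var : ℕ → Expr
  | bot : Expr
  | con : ℕ → List Expr → Expr
  | fn  : ℕ → List Expr → Expr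

namespace Expr

/-- Occurrence of a data variable in an expression. -/
inductive Occurs (x : ℕ) : Expr → Prop where
  | var : Occurs x (var x)
  | con {c : ℕ} {es : List Expr} {e : Expr} : e ∈ es → Occurs x e → Occurs x (con c es)
  | fn {f : ℕ} {es : List Expr} {e : Expr} : e ∈ es → Occurs x e → Occurs x (fn f es)

/-- Partial data terms: built from variables, ⊥ and data constructors only. -/
inductive IsTerm : Expr → Prop where
  | var (x : ℕ) : IsTerm (var x)
  | bot : IsTerm bot
  | con {c : ℕ} {es : List Expr} : (∀ e ∈ es, IsTerm e) → IsTerm (con c es)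

/-- Total expressions: no occurrence of ⊥. -/
inductive NoBot : Expr → Prop where
  | var (x : ℕ) : NoBot (var x)
  | con {c : ℕ} {es : List Expr} : (∀ e ∈ es, NoBot e) → NoBot (con c es)
  | fn {f : ℕ} {es : List Expr} : (∀ e ∈ es, NoBot e) → NoBot (fn f es)

/-- Total data terms. -/
def IsTotalTerm (e : Expr) : Prop := IsTerm e ∧ NoBot e

/-- Application of a data substitution. -/
def subst (σ : ℕ → Expr) : Expr → Expr
  | var x => σ x
  | bot => bot
  | con c es => con c (es.attach.map fun e => subst σ e.1)
  | fn f es => fn f (es.attach.map fun e => subst σ e.1)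
termination_by e => sizeOf e
decreasing_by
  all_goals (simp only [Expr.con.sizeOf_spec, Expr.fn.sizeOf_spec]; have := List.sizeOf_lt_of_mem e.2; omega)

/-- Number of occurrences of the variable `x`. -/
def varCount (x : ℕ) : Expr → ℕ
  | var y => if y = x then 1 else 0
  | bot => 0
  | con _ es => (es.attach.map fun e => varCount x e.1).sum
  | fn _ es => (es.attach.map fun e => varCount x e.1).sum
termination_by e => sizeOf e
decreasing_by
  all_goals (simp only [Expr.con.sizeOf_spec, Expr.fn.sizeOf_spec]; have := List.sizeOf_lt_of_mem e.2; omega)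

end Expr

/-- A set of equational axioms between (total data) terms. -/
abbrev Axioms := Set (Expr × Expr)

/-- A data substitution mapping every variable to a partial data term. -/
def TermSub (σ : ℕ → Expr) : Prop := ∀ x, (σ x).IsTerm

/-- `σ` is safe for `t`: variables occurring more than once in `t`
are mapped to total data terms. -/
def SafeSub (σ : ℕ → Expr) (t : Expr) : Prop :=
  ∀ x, 2 ≤ Expr.varCount x t → Expr.IsTotalTerm (σ x)

/-- Well-formed set of equational axioms: a finite set of equations between
total data terms. -/
def WfAxioms (C : Axioms) : Prop :=
  C.Finite ∧ ∀ p ∈ C, Expr.IsTotalTerm p.1 ∧ Expr.IsTotalTerm p.2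

/-- `[C]_⊒` : the instances of the axioms of `C`, read in both directions,
under safe partial data substitutions. -/
def CInstances (C : Axioms) : Set (Expr × Expr) :=
  { q | ∃ p ∈ C, ∃ σ : ℕ → Expr, TermSub σ ∧
      ((SafeSub σ p.1 ∧ q = (p.1.subst σ, p.2.subst σ)) ∨
       (SafeSub σ p.2 ∧ q = (p.2.subst σ, p.1.subst σ))) }

/-- Every axiom is regular : both sides have the same data variables. -/
def RegularAxioms (C : Axioms) : Prop :=
  ∀ p ∈ C, ∀ x, Expr.Occurs x p.1 ↔ Expr.Occurs x p.2

/-- Every axiom is non-collapsing : neither side is a variable. -/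
def NonCollapsing (C : Axioms) : Prop :=
  ∀ p ∈ C, (∀ x, p.1 ≠ Expr.var x) ∧ (∀ x, p.2 ≠ Expr.var x)

/-- Strongly regular set of axioms. -/
def StronglyRegular (C : Axioms) : Prop := RegularAxioms C ∧ NonCollapsing C

/-- The inequational calculus associated to `C`, deriving approximation
inequalities `s ⊒ t` between partial data terms. -/
inductive Geq (C : Axioms) : Expr → Expr → Prop where
  | bot {t : Expr} : t.IsTerm → Geq C t Expr.bot
  | refl {t : Expr} : t.IsTerm → Geq C t t
  | trans {t t' t'' : Expr} : Geq C t t' → Geq C t' t'' → Geq C t t''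
  | mono {c : ℕ} {ts ss : List Expr} : ts.length = ss.length →
      (∀ p ∈ ts.zip ss, Geq C p.1 p.2) → Geq C (Expr.con c ts) (Expr.con c ss)
  | ax {s t : Expr} : (s, t) ∈ CInstances C → Geq C s t

/-- `s ≈_C t` iff `s ⊒_C t` and `t ⊒_C s`. -/
def EqC (C : Axioms) (s t : Expr) : Prop := Geq C s t ∧ Geq C t s

end ACRWL

namespace ACRWL

lemma subst_isTerm {σ : ℕ → Expr} (hσ : TermSub σ) {u : Expr} (hu : u.IsTerm) :
    (u.subst σ).IsTerm := by
  induction hu with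
  | var x => simpa [Expr.subst] using hσ x
  | bot => simpa [Expr.subst] using Expr.IsTerm.bot
  | @con c es h ih =>
    rw [Expr.subst]
    refine Expr.IsTerm.con ?_
    intro e he
    simp only [List.mem_map, List.mem_attach, true_and, Subtype.exists] at he
    obtain ⟨a, ha, rfl⟩ := he
    exact ih a ha

lemma subst_noBot {σ : ℕ → Expr} {u : Expr} (hu : u.NoBot)
    (hσ : ∀ x, Expr.Occurs x u → (σ x).NoBot) : (u.subst σ).NoBot := by
  induction hu with
  | var x => simpa [Expr.subst] using hσ x Expr.Occurs.var
  | @con c es h ih =>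
    rw [Expr.subst]
    refine Expr.NoBot.con ?_
    intro e he
    simp only [List.mem_map, List.mem_attach, true_and, Subtype.exists] at he
    obtain ⟨a, ha, rfl⟩ := he
    exact ih a ha (fun x hx => hσ x (Expr.Occurs.con ha hx))
  | @fn f es h ih =>
    rw [Expr.subst]
    refine Expr.NoBot.fn ?_
    intro e he
    simp only [List.mem_map, List.mem_attach, true_and, Subtype.exists] at he
    obtain ⟨a, ha, rfl⟩ := he
    exact ih a ha (fun x hx => hσ x (Expr.Occurs.fn ha hx))

lemma noBot_of_occurs {σ : ℕ → Expr} {x : ℕ} {u : Expr} (ho : Expr.Occurs x u)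
    (h : (u.subst σ).NoBot) : (σ x).NoBot := by
  induction ho with
  | var => simpa [Expr.subst] using h
  | @con c es e he _ ih =>
    rw [Expr.subst] at h
    cases h with
    | con hall =>
      exact ih (hall _ (List.mem_map.mpr ⟨⟨e, he⟩, List.mem_attach _ _, rfl⟩))
  | @fn f es e he _ ih =>
    rw [Expr.subst] at h
    cases h with
    | fn hall =>
      exact ih (hall _ (List.mem_map.mpr ⟨⟨e, he⟩, List.mem_attach _ _, rfl⟩))

lemma occurs_of_varCount {x : ℕ} : ∀ (u : Expr), 1 ≤ Expr.varCount x u → Expr.Occurs x u := by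
  have key : ∀ (n : ℕ) (u : Expr), sizeOf u ≤ n → 1 ≤ Expr.varCount x u → Expr.Occurs x u := by
    intro n
    induction n with
    | zero => intro u hu; cases u <;> simp at hu
    | succ n ih =>
      intro u hu hc
      cases u with
      | var y =>
        rw [Expr.varCount] at hc
        split at hc
        · subst ‹y = x›; exact Expr.Occurs.var
        · omega
      | bot => rw [Expr.varCount] at hc; omega
      | con c es =>
        rw [Expr.varCount] at hc
        have : ∃ m ∈ (es.attach.map fun e => Expr.varCount x e.1), m ≠ 0 := by
          by_contra hcon
          push_neg at hcon
          have := List.sum_eq_zero hcon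
          omega
        obtain ⟨m, hm, hm0⟩ := this
        simp only [List.mem_map, List.mem_attach, true_and, Subtype.exists] at hm
        obtain ⟨a, ha, rfl⟩ := hm
        have hsz : sizeOf a ≤ n := by
          have := List.sizeOf_lt_of_mem ha
          simp only [Expr.con.sizeOf_spec] at hu
          omega
        exact Expr.Occurs.con ha (ih a hsz (by omega))
      | fn f es =>
        rw [Expr.varCount] at hc
        have : ∃ m ∈ (es.attach.map fun e => Expr.varCount x e.1), m ≠ 0 := by
          by_contra hcon
          push_neg at hcon
          have := List.sum_eq_zero hcon
          omega
        obtain ⟨m, hm, hm0⟩ := this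
        simp only [List.mem_map, List.mem_attach, true_and, Subtype.exists] at hm
        obtain ⟨a, ha, rfl⟩ := hm
        have hsz : sizeOf a ≤ n := by
          have := List.sizeOf_lt_of_mem ha
          simp only [Expr.fn.sizeOf_spec] at hu
          omega
        exact Expr.Occurs.fn ha (ih a hsz (by omega))
  exact fun u => key (sizeOf u) u le_rfl

lemma mem_zip_swap {α β : Type*} {l : List α} {l' : List β} :
    ∀ {p : α × β}, p ∈ l.zip l' → (p.2, p.1) ∈ l'.zip l := by
  induction l generalizing l' with
  | nil => simp
  | cons a l ih =>
    cases l' with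
    | nil => simp
    | cons b l' =>
      intro p hp
      simp only [List.zip_cons_cons, List.mem_cons] at hp ⊢
      rcases hp with rfl | hp
      · exact Or.inl rfl
      · exact Or.inr (ih hp)

lemma exists_mem_zip_left {α β : Type*} {l : List α} {l' : List β}
    (hlen : l.length = l'.length) : ∀ {a : α}, a ∈ l → ∃ b, (a, b) ∈ l.zip l' := by
  induction l generalizing l' with
  | nil => simp
  | cons a l ih =>
    cases l' with
    | nil => simp at hlen
    | cons b l' =>
      intro a' ha'
      simp only [List.mem_cons] at ha'
      rcases ha' with rfl | ha'
      · exact ⟨b, by simp [List.zip_cons_cons]⟩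
      · obtain ⟨b', hb'⟩ := ih (by simpa using hlen) ha'
        exact ⟨b', by simp only [List.zip_cons_cons, List.mem_cons]; exact Or.inr hb'⟩

lemma totalTerm_of_subst_occurs {σ : ℕ → Expr} (hσ : TermSub σ) {x : ℕ} {u : Expr}
    (ho : Expr.Occurs x u) (h : (u.subst σ).NoBot) : Expr.IsTotalTerm (σ x) :=
  ⟨hσ x, noBot_of_occurs ho h⟩

/-- Proposition 2.1 (c): for a finite regular set `C` of equational axioms,
if `s ⊒_C t` and `t` is a total data term then `s` is a total data term and
`s ≈_C t`. -/
theorem geq_total_of_regular (C : Axioms) (hC : WfAxioms C)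
    (hreg : RegularAxioms C) (s t : Expr) (hs : s.IsTerm) (ht : t.IsTerm)
    (h : Geq C s t) (htot : Expr.IsTotalTerm t) :
    Expr.IsTotalTerm s ∧ EqC C s t := by
  clear hs ht
  revert htot
  induction h with
  | bot h => intro htot; cases htot.2
  | refl h => intro htot; exact ⟨htot, Geq.refl h, Geq.refl h⟩
  | trans h1 h2 ih1 ih2 =>
    intro htot
    obtain ⟨ht', he'⟩ := ih2 htot
    obtain ⟨hs', he⟩ := ih1 ht'
    exact ⟨hs', Geq.trans he.1 he'.1, Geq.trans he'.2 he.2⟩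
  | @mono c ts ss hlen hall ih =>
    intro htot
    have hterm : ∀ e ∈ ss, Expr.IsTerm e := by
      cases htot.1 with | con h => exact h
    have hnb : ∀ e ∈ ss, Expr.NoBot e := by
      cases htot.2 with | con h => exact h
    have hpair : ∀ p ∈ ts.zip ss, Expr.IsTotalTerm p.1 ∧ EqC C p.1 p.2 := by
      intro p hp
      have h2 := List.of_mem_zip hp
      exact ih p hp ⟨hterm _ h2.2, hnb _ h2.2⟩
    refine ⟨⟨Expr.IsTerm.con ?_, Expr.NoBot.con ?_⟩,
      Geq.mono hlen (fun p hp => (hpair p hp).2.1),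
      Geq.mono hlen.symm (fun p hp => (hpair _ (mem_zip_swap hp)).2.2)⟩
    · intro e he
      obtain ⟨b, hb⟩ := exists_mem_zip_left hlen he
      exact (hpair _ hb).1.1
    · intro e he
      obtain ⟨b, hb⟩ := exists_mem_zip_left hlen he
      exact (hpair _ hb).1.2
  | @ax s t hmem =>
    intro htot
    obtain ⟨p, hp, σ, hσ, hcase⟩ := hmem
    obtain ⟨hp1, hp2⟩ := hC.2 p hp
    have hregp := hreg p hp
    rcases hcase with ⟨hsafe, heq⟩ | ⟨hsafe, heq⟩
    · rw [Prod.mk.injEq] at heq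
      obtain ⟨hseq, hteq⟩ := heq
      subst hseq; subst hteq
      have hocc2 : ∀ x, Expr.Occurs x p.2 → Expr.IsTotalTerm (σ x) :=
        fun x hx => totalTerm_of_subst_occurs hσ hx htot.2
      have hocc1 : ∀ x, Expr.Occurs x p.1 → Expr.IsTotalTerm (σ x) :=
        fun x hx => hocc2 x ((hregp x).1 hx)
      have hsafe2 : SafeSub σ p.2 := fun x hx =>
        hocc2 x (occurs_of_varCount _ (le_trans (by omega) hx))
      refine ⟨⟨subst_isTerm hσ hp1.1, subst_noBot hp1.2 (fun x hx => (hocc1 x hx).2)⟩,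
        Geq.ax ⟨p, hp, σ, hσ, Or.inl ⟨hsafe, rfl⟩⟩,
        Geq.ax ⟨p, hp, σ, hσ, Or.inr ⟨hsafe2, rfl⟩⟩⟩
    · rw [Prod.mk.injEq] at heq
      obtain ⟨hseq, hteq⟩ := heq
      subst hseq; subst hteq
      have hocc1 : ∀ x, Expr.Occurs x p.1 → Expr.IsTotalTerm (σ x) :=
        fun x hx => totalTerm_of_subst_occurs hσ hx htot.2
      have hocc2 : ∀ x, Expr.Occurs x p.2 → Expr.IsTotalTerm (σ x) :=
        fun x hx => hocc1 x ((hregp x).2 hx)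
      have hsafe1 : SafeSub σ p.1 := fun x hx =>
        hocc1 x (occurs_of_varCount _ (le_trans (by omega) hx))
      exact ⟨⟨subst_isTerm hσ hp2.1, subst_noBot hp2.2 (fun x hx => (hocc2 x hx).2)⟩,
        Geq.ax ⟨p, hp, σ, hσ, Or.inr ⟨hsafe, rfl⟩⟩,
        Geq.ax ⟨p, hp, σ, hσ, Or.inl ⟨hsafe1, rfl⟩⟩⟩

end ACRWL
end

section
/- Let V and V₀ be environments and σ_t a type substitution. Let e be a partial expression such that every function symbol occurring in e has a transparent principal type (a declaration h : (τ₁,…,τₙ) → τ with tvar(τᵢ) ⊆ tvar(τ) for all i). If e ∈ Expr^τ_{Σ⊥}(V₀) ∩ Expr^{τσ_t}_{Σ⊥}(V), then V = V₀σ_t on dvar(e), i.e., for every data variable x occurring in e and every type τ': (x : τ') ∈ V if and only if (x : τ') ∈ V₀σ_t, where V₀σ_t = {x : τ''σ_t | (x : τ'') ∈ V₀}. -/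
namespace ACRWL

/-- Polymorphic types built from type variables and type constructors. -/
inductive Ty : Type where
  | tvar : ℕ → Ty
  | tcon : ℕ → List Ty → Ty

namespace Ty

/-- Occurrence of a type variable in a type. -/
inductive OccursT (α : ℕ) : Ty → Prop where
  | tvar : OccursT α (tvar α)
  | tcon {K : ℕ} {τs : List Ty} {τ : Ty} : τ ∈ τs → OccursT α τ → OccursT α (tcon K τs)

/-- Application of a type substitution. -/
def subst (σ : ℕ → Ty) : Ty → Ty
  | tvar α => σ α
  | tcon K τs => tcon K (τs.attach.map fun τ => subst σ τ.1)
termination_by τ => sizeOf τ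
decreasing_by
  all_goals (simp only [Ty.tcon.sizeOf_spec]; have := List.sizeOf_lt_of_mem τ.2; omega)

end Ty

/-- A principal type declaration `(τ₁,…,τₙ) → τ`. -/
structure Decl : Type where
  args : List Ty
  res : Ty

/-- Transparency: every type variable of the argument types occurs in the
result type. -/
def Decl.Transparent (d : Decl) : Prop :=
  ∀ α : ℕ, (∃ τ ∈ d.args, Ty.OccursT α τ) → Ty.OccursT α d.res

/-- Instance of a declaration under a type substitution. -/
def Decl.substT (σt : ℕ → Ty) (d : Decl) : Decl :=
  ⟨d.args.map (Ty.subst σt), d.res.subst σt⟩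

/-- A variant of a declaration: a renaming of its type variables. -/
def IsVariant (d d' : Decl) : Prop :=
  ∃ ρ : ℕ → ℕ, Function.Injective ρ ∧ d' = d.substT (fun α => Ty.tvar (ρ α))

/-- A polymorphic signature: (optional) principal type declarations for data
constructors and for defined function symbols, the former transparent. -/
structure Signature : Type where
  dc : ℕ → Option Decl
  fs : ℕ → Option Decl
  dc_trans : ∀ c d, dc c = some d → Decl.Transparent d

/-- An environment: at most one type annotation per data variable. -/
abbrev Env := ℕ → Option Ty

/-- Instance of an environment under a type substitution. -/
def Env.substT (V : Env) (σt : ℕ → Ty) : Env := fun x => (V x).map (Ty.subst σt)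

/-- The type inference system: `HasType Sg V e τ` is the judgement
`V ⊢_{Σ⊥} e : τ`.  The symbol `⊥` has principal type `⊥ : → α`, hence
every type is an admissible instance for it. -/
inductive HasType (Sg : Signature) (V : Env) : Expr → Ty → Prop where
  | var {x : ℕ} {τ : Ty} : V x = some τ → HasType Sg V (Expr.var x) τ
  | bot (τ : Ty) : HasType Sg V Expr.bot τ
  | con {c : ℕ} {es : List Expr} {d : Decl} {σt : ℕ → Ty} :
      Sg.dc c = some d → es.length = d.args.length →
      (∀ p ∈ es.zip d.args, HasType Sg V p.1 (Ty.subst σt p.2)) →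
      HasType Sg V (Expr.con c es) (Ty.subst σt d.res)
  | fn {f : ℕ} {es : List Expr} {d : Decl} {σt : ℕ → Ty} :
      Sg.fs f = some d → es.length = d.args.length →
      (∀ p ∈ es.zip d.args, HasType Sg V p.1 (Ty.subst σt p.2)) →
      HasType Sg V (Expr.fn f es) (Ty.subst σt d.res)

/-- Occurrence of a function symbol in an expression. -/
inductive FnOccurs (f : ℕ) : Expr → Prop where
  | head {es : List Expr} : FnOccurs f (Expr.fn f es)
  | con {c : ℕ} {es : List Expr} {e : Expr} : e ∈ es → FnOccurs f e → FnOccurs f (Expr.con c es)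
  | fn {g : ℕ} {es : List Expr} {e : Expr} : e ∈ es → FnOccurs f e → FnOccurs f (Expr.fn g es)

end ACRWL

/- By induction on the typing of `e` under `V₀`. At an application `h(e₁,…,eₙ)`
the two derivations use instances of the same principal type of `h`, and their result types
are related by `σt`; transparency forces the argument types to be related by `σt` as well,
so the induction hypothesis applies to every argument. -/

theorem List.exists_mem_zip_of_mem_left {α β : Type*} {l₁ : List α} {l₂ : List β}
    (hlen : l₁.length = l₂.length) {a : α} (ha : a ∈ l₁) : ∃ b, (a, b) ∈ l₁.zip l₂ := by
  obtain ⟨⟨_, b⟩, hp, rfl⟩ := List.mem_map.mp ((List.map_fst_zip hlen.le).symm ▸ ha)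
  exact ⟨b, hp⟩

namespace ACRWL

namespace Ty

@[simp]
theorem subst_tcon (σ : ℕ → Ty) (K : ℕ) (τs : List Ty) :
    (tcon K τs).subst σ = tcon K (τs.map (subst σ)) := by
  rw [subst]
  simp

theorem subst_congr {σ σ' : ℕ → Ty} (τ : Ty) (h : ∀ α, OccursT α τ → σ α = σ' α) :
    τ.subst σ = τ.subst σ' := by
  induction τ using subst.induct with
  | case1 α => simpa [subst] using h α .tvar
  | case2 K τs ih =>
    simp only [subst_tcon, tcon.injEq, true_and]
    exact List.map_congr_left fun τ hτ => ih ⟨τ, hτ⟩ fun α hα => h α (.tcon hτ hα)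

theorem subst_subst (σ σ₀ : ℕ → Ty) (τ : Ty) :
    (τ.subst σ₀).subst σ = τ.subst fun α => (σ₀ α).subst σ := by
  induction τ using subst.induct with
  | case1 α => simp [subst]
  | case2 K τs ih =>
    simp only [subst_tcon, List.map_map, tcon.injEq, true_and]
    exact List.map_congr_left fun τ hτ => ih ⟨τ, hτ⟩

theorem OccursT.subst_eq {σ σ' : ℕ → Ty} {α : ℕ} {τ : Ty} (hα : OccursT α τ)
    (h : τ.subst σ = τ.subst σ') : σ α = σ' α := by
  induction hα with
  | tvar => simpa [subst] using h
  | tcon hmem _ ih =>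
    simp only [subst_tcon, tcon.injEq, true_and] at h
    exact ih (List.map_eq_map_iff.mp h _ hmem)

end Ty

theorem Decl.Transparent.subst_arg_eq {d : Decl} (hd : d.Transparent) {σ σ' : ℕ → Ty}
    (hres : d.res.subst σ = d.res.subst σ') {a : Ty} (ha : a ∈ d.args) :
    a.subst σ = a.subst σ' :=
  a.subst_congr fun α hα => (hd α ⟨a, ha, hα⟩).subst_eq hres

theorem Decl.Transparent.subst_arg_eq_subst_subst {d : Decl} (hd : d.Transparent)
    {σ σ₀ σ₁ : ℕ → Ty} (hres : d.res.subst σ₁ = (d.res.subst σ₀).subst σ) {a : Ty}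
    (ha : a ∈ d.args) : a.subst σ₁ = (a.subst σ₀).subst σ := by
  rw [Ty.subst_subst] at hres ⊢
  exact hd.subst_arg_eq hres ha

namespace HasType

variable {Sg : Signature} {V : Env} {es : List Expr} {τ : Ty}

theorem con_inv {c : ℕ} (h : HasType Sg V (Expr.con c es) τ) :
    ∃ d σ, Sg.dc c = some d ∧ (∀ p ∈ es.zip d.args, HasType Sg V p.1 (p.2.subst σ)) ∧
      τ = d.res.subst σ := by
  cases h with
  | con hd _ hargs => exact ⟨_, _, hd, hargs, rfl⟩

theorem fn_inv {f : ℕ} (h : HasType Sg V (Expr.fn f es) τ) :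
    ∃ d σ, Sg.fs f = some d ∧ (∀ p ∈ es.zip d.args, HasType Sg V p.1 (p.2.subst σ)) ∧
      τ = d.res.subst σ := by
  cases h with
  | fn hd _ hargs => exact ⟨_, _, hd, hargs, rfl⟩

theorem args_subst_subst {d : Decl} (hd : d.Transparent) {σ σ₀ σ₁ : ℕ → Ty}
    (hres : (d.res.subst σ₀).subst σ = d.res.subst σ₁)
    (hargs : ∀ p ∈ es.zip d.args, HasType Sg V p.1 (p.2.subst σ₁)) :
    ∀ p ∈ es.zip d.args, HasType Sg V p.1 ((p.2.subst σ₀).subst σ) := fun p hp =>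
  hd.subst_arg_eq_subst_subst hres.symm (List.of_mem_zip hp).2 ▸ hargs p hp

end HasType

/-- Lemma 4.5: if every function symbol occurring in `e` has a transparent
principal type and `e ∈ Expr^τ_{Σ⊥}(V₀) ∩ Expr^{τσt}_{Σ⊥}(V)`, then `V` and
`V₀σt` agree on the data variables of `e`. -/
theorem env_eq_on_dvar (Sg : Signature) (V V₀ : Env) (σt : ℕ → Ty)
    (e : Expr) (τ : Ty)
    (htrans : ∀ f, FnOccurs f e → ∀ d, Sg.fs f = some d → Decl.Transparent d)
    (h₀ : HasType Sg V₀ e τ) (h : HasType Sg V e (Ty.subst σt τ)) :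
    ∀ x : ℕ, Expr.Occurs x e → V x = (V₀ x).map (Ty.subst σt) := by
  induction h₀ with
  | var hx₀ =>
    rintro x ⟨⟩
    cases h with
    | var hx => rw [hx, hx₀, Option.map_some]
  | bot => rintro x ⟨⟩
  | con hd hlen _ ih =>
    obtain ⟨d, σ₁, hd', hargs, hres⟩ := h.con_inv
    cases hd.symm.trans hd'
    rintro x (_ | ⟨he, hx⟩ | _)
    obtain ⟨a, hp⟩ := List.exists_mem_zip_of_mem_left hlen he
    exact ih _ hp (fun g hg => htrans g (.con he hg))
      (HasType.args_subst_subst (Sg.dc_trans _ _ hd) hres hargs _ hp) x hx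
  | fn hd hlen _ ih =>
    obtain ⟨d, σ₁, hd', hargs, hres⟩ := h.fn_inv
    cases hd.symm.trans hd'
    rintro x (_ | _ | ⟨he, hx⟩)
    obtain ⟨a, hp⟩ := List.exists_mem_zip_of_mem_left hlen he
    exact ih _ hp (fun g hg => htrans g (.fn he hg))
      (HasType.args_subst_subst (htrans _ .head _ hd) hres hargs _ hp) x hx

end ACRWL
end

section
/- Let e be a partial expression and σ_d a partial data substitution such that {x₁,…,x_m} = {x ∈ dvar(e) | xσ_d ≠ x} and xᵢσ_d = t'ᵢ for 1 ≤ i ≤ m, and assume each xᵢ occurs at most once in e. Let V be an environment such that eσ_d ∈ Expr^{τ'}_{Σ⊥}(V). Then there exist types τ'₁,…,τ'_m such that t'ᵢ ∈ Term^{τ'ᵢ}_{Σ⊥}(V) for 1 ≤ i ≤ m and V[x₁:τ'₁,…,x_m:τ'_m] ⊢ e : τ'. -/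
namespace ACRWL

namespace Expr

@[simp] theorem subst_var (σ : ℕ → Expr) (x : ℕ) : (var x).subst σ = σ x := by
  rw [subst]

@[simp] theorem subst_con (σ : ℕ → Expr) (c : ℕ) (es : List Expr) :
    (con c es).subst σ = con c (es.map (subst σ)) := by
  rw [subst, List.attach_map_val]

@[simp] theorem subst_fn (σ : ℕ → Expr) (f : ℕ) (es : List Expr) :
    (fn f es).subst σ = fn f (es.map (subst σ)) := by
  rw [subst, List.attach_map_val]

@[simp] theorem varCount_con (x c : ℕ) (es : List Expr) :
    varCount x (con c es) = (es.map (varCount x)).sum := by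
  rw [varCount, List.attach_map_val]

@[simp] theorem varCount_fn (x f : ℕ) (es : List Expr) :
    varCount x (fn f es) = (es.map (varCount x)).sum := by
  rw [varCount, List.attach_map_val]

theorem occurs_var_iff {x y : ℕ} : Occurs x (var y) ↔ x = y :=
  ⟨fun | .var => rfl, by rintro rfl; exact .var⟩

theorem occurs_con_iff {x c : ℕ} {es : List Expr} : Occurs x (con c es) ↔ ∃ e ∈ es, Occurs x e :=
  ⟨by rintro (_ | ⟨he, h⟩); exact ⟨_, he, h⟩, fun ⟨_, he, h⟩ => .con he h⟩

theorem occurs_fn_iff {x f : ℕ} {es : List Expr} : Occurs x (fn f es) ↔ ∃ e ∈ es, Occurs x e :=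
  ⟨by rintro (_ | _ | ⟨he, h⟩); exact ⟨_, he, h⟩, fun ⟨_, he, h⟩ => .fn he h⟩

theorem Occurs.varCount_pos {x : ℕ} {e : Expr} (h : Occurs x e) : 0 < varCount x e := by
  induction h with
  | var => simp [varCount]
  | con he _ ih | fn he _ ih =>
    simpa using ih.trans_le (List.le_sum_of_mem (List.mem_map_of_mem he))

end Expr

open ACRWL.Expr

theorem hasType_con_iff {Sg : Signature} {V : Env} {c : ℕ} {es : List Expr} {τ : Ty} :
    HasType Sg V (con c es) τ ↔ ∃ d σt, Sg.dc c = some d ∧ τ = d.res.subst σt ∧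
      List.Forall₂ (HasType Sg V) es (d.args.map (Ty.subst σt)) := by
  simp only [List.forall₂_map_right_iff]
  simp only [List.forall₂_iff_zip]
  constructor
  · rintro (_ | _ | ⟨hd, hlen, hargs⟩)
    exact ⟨_, _, hd, rfl, hlen, fun hp => hargs _ hp⟩
  · rintro ⟨d, σt, hd, rfl, hlen, hargs⟩
    exact .con hd hlen fun _ hp => hargs hp

theorem hasType_fn_iff {Sg : Signature} {V : Env} {f : ℕ} {es : List Expr} {τ : Ty} :
    HasType Sg V (fn f es) τ ↔ ∃ d σt, Sg.fs f = some d ∧ τ = d.res.subst σt ∧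
      List.Forall₂ (HasType Sg V) es (d.args.map (Ty.subst σt)) := by
  simp only [List.forall₂_map_right_iff]
  simp only [List.forall₂_iff_zip]
  constructor
  · rintro (_ | _ | _ | ⟨hd, hlen, hargs⟩)
    exact ⟨_, _, hd, rfl, hlen, fun hp => hargs _ hp⟩
  · rintro ⟨d, σt, hd, rfl, hlen, hargs⟩
    exact .fn hd hlen fun _ hp => hargs hp

theorem HasType.congr_env {Sg : Signature} {V W : Env} {e : Expr} {τ : Ty}
    (h : HasType Sg V e τ) (hVW : ∀ x, Occurs x e → V x = W x) : HasType Sg W e τ := by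
  induction h generalizing W with
  | var hx => exact .var ((hVW _ .var).symm.trans hx)
  | bot τ => exact .bot τ
  | con hd hlen _ ih =>
    exact .con hd hlen fun p hp => ih p hp fun x hx =>
      hVW x (.con (List.of_mem_zip hp).1 hx)
  | fn hd hlen _ ih =>
    exact .fn hd hlen fun p hp => ih p hp fun x hx =>
      hVW x (.fn (List.of_mem_zip hp).1 hx)

theorem forall₂_hasType_congr_env {Sg : Signature} {V W : Env} {es : List Expr} {τs : List Ty}
    (h : List.Forall₂ (HasType Sg V) es τs) (hVW : ∀ x, (∃ e ∈ es, Occurs x e) → V x = W x) :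
    List.Forall₂ (HasType Sg W) es τs := by
  induction h with
  | nil => exact .nil
  | cons he _ ih =>
    simp only [List.exists_mem_cons_iff] at hVW
    exact .cons (he.congr_env fun x hx => hVW x (.inl hx)) (ih fun x hx => hVW x (.inr hx))

/-- `W` is `V[x₁:τ₁,…,x_m:τ_m]` where `x₁,…,x_m` are the variables satisfying `P` that `σ`
moves, and `τᵢ` is a type of `xᵢσ` in `V`. -/
def IsSubstUpdate (Sg : Signature) (V : Env) (σ : ℕ → Expr) (P : ℕ → Prop) (W : Env) : Prop :=
  (∀ x, P x → σ x ≠ var x → ∃ τx, W x = some τx ∧ HasType Sg V (σ x) τx) ∧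
    (∀ x, ¬ (P x ∧ σ x ≠ var x) → W x = V x)

namespace IsSubstUpdate

variable {Sg : Signature} {V W W' : Env} {σ : ℕ → Expr} {P Q : ℕ → Prop}

theorem self (h : ∀ x, P x → σ x = var x) : IsSubstUpdate Sg V σ P V :=
  ⟨fun x hx hσ => absurd (h x hx) hσ, fun _ _ => rfl⟩

theorem apply_of_eq_var (hW : IsSubstUpdate Sg V σ P W) {x : ℕ} (hx : σ x = var x) : W x = V x :=
  hW.2 x fun h => h.2 hx

theorem update {x : ℕ} {τ : Ty} (hx : σ x ≠ var x) (hτ : HasType Sg V (σ x) τ) :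
    IsSubstUpdate Sg V σ (· = x) (Function.update V x (some τ)) := by
  refine ⟨fun y hy _ => ⟨τ, ?_⟩, fun y hy => Function.update_of_ne ?_ _ _⟩
  · subst hy; exact ⟨Function.update_self .., hτ⟩
  · rintro rfl; exact hy ⟨rfl, hx⟩

open Classical in
theorem ite (hW : IsSubstUpdate Sg V σ P W) (hW' : IsSubstUpdate Sg V σ Q W') :
    IsSubstUpdate Sg V σ (fun x => P x ∨ Q x) (fun x => if P x then W x else W' x) := by
  refine ⟨fun x hx hσ => ?_, fun x hx => ?_⟩
  · by_cases hP : P x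
    · simpa [hP] using hW.1 x hP hσ
    · simpa [hP] using hW'.1 x (hx.resolve_left hP) hσ
  · by_cases hP : P x
    · simpa [hP] using hW.2 x fun h => hx ⟨.inl h.1, h.2⟩
    · simpa [hP] using hW'.2 x fun h => hx ⟨.inr h.1, h.2⟩

end IsSubstUpdate

section

variable {Sg : Signature} {V : Env} {σ : ℕ → Expr}

theorem exists_isSubstUpdate_of_forall₂_hasType_subst {es : List Expr} {τs : List Ty}
    (ih : ∀ e ∈ es, ∀ τ, (∀ x, σ x ≠ var x → varCount x e ≤ 1) →
      HasType Sg V (e.subst σ) τ →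
      ∃ W, IsSubstUpdate Sg V σ (Occurs · e) W ∧ HasType Sg W e τ)
    (hlin : ∀ x, σ x ≠ var x → (es.map (varCount x)).sum ≤ 1)
    (h : List.Forall₂ (fun e τ => HasType Sg V (e.subst σ) τ) es τs) :
    ∃ W, IsSubstUpdate Sg V σ (fun x => ∃ e ∈ es, Occurs x e) W ∧
      List.Forall₂ (HasType Sg W) es τs := by
  induction h with
  | nil => exact ⟨V, IsSubstUpdate.self fun _ ⟨_, he, _⟩ => (nomatch he), .nil⟩
  | @cons e τ es τs ht _ ihs =>
    classical
    simp only [List.map_cons, List.sum_cons] at hlin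
    obtain ⟨W, hW, hWe⟩ := ih e List.mem_cons_self τ (fun x hx => le_self_add.trans (hlin x hx)) ht
    obtain ⟨W', hW', hW'es⟩ := ihs (fun e he => ih e (List.mem_cons_of_mem _ he))
      (fun x hx => le_add_self.trans (hlin x hx))
    -- linearity: a variable moved by `σ` cannot occur both in `e` and in `es`
    have hagree : ∀ x, Occurs x e → (∃ e' ∈ es, Occurs x e') → W x = W' x := by
      intro x hxe ⟨e', he', hxe'⟩
      by_cases hx : σ x = var x
      · rw [hW.apply_of_eq_var hx, hW'.apply_of_eq_var hx]
      · have := hlin x hx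
        have := hxe.varCount_pos
        have := hxe'.varCount_pos.trans_le (List.le_sum_of_mem (List.mem_map_of_mem he'))
        omega
    refine ⟨fun x => if Occurs x e then W x else W' x,
      by simpa only [List.exists_mem_cons_iff] using hW.ite hW', .cons ?_ ?_⟩
    · exact hWe.congr_env fun x hx => (if_pos hx).symm
    · refine forall₂_hasType_congr_env hW'es fun x hx => ?_
      by_cases hxe : Occurs x e
      · rw [if_pos hxe, hagree x hxe hx]
      · rw [if_neg hxe]

theorem exists_isSubstUpdate_of_hasType_subst :
    ∀ (e : Expr) (τ : Ty), (∀ x, σ x ≠ var x → varCount x e ≤ 1) →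
      HasType Sg V (e.subst σ) τ →
      ∃ W, IsSubstUpdate Sg V σ (Occurs · e) W ∧ HasType Sg W e τ
  | var y, τ, _, ht => by
    by_cases hy : σ y = var y
    · refine ⟨V, IsSubstUpdate.self fun x hx => ?_, by simpa [hy] using ht⟩
      rwa [occurs_var_iff.1 hx]
    · refine ⟨_, ?_, .var (Function.update_self y (some τ) V)⟩
      simpa only [occurs_var_iff] using IsSubstUpdate.update hy (by simpa using ht)
  | bot, τ, _, _ => ⟨V, IsSubstUpdate.self fun _ hx => (nomatch hx), .bot τ⟩
  | con c es, τ, hlin, ht => by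
    obtain ⟨d, σt, hd, rfl, hargs⟩ := hasType_con_iff.1 (by simpa using ht)
    obtain ⟨W, hW, hargsW⟩ := exists_isSubstUpdate_of_forall₂_hasType_subst
      (fun e _ => exists_isSubstUpdate_of_hasType_subst e)
      (by simpa using hlin) (List.forall₂_map_left_iff.1 hargs)
    exact ⟨W, by simpa only [occurs_con_iff], hasType_con_iff.2 ⟨d, σt, hd, rfl, hargsW⟩⟩
  | fn f es, τ, hlin, ht => by
    obtain ⟨d, σt, hd, rfl, hargs⟩ := hasType_fn_iff.1 (by simpa using ht)
    obtain ⟨W, hW, hargsW⟩ := exists_isSubstUpdate_of_forall₂_hasType_subst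
      (fun e _ => exists_isSubstUpdate_of_hasType_subst e)
      (by simpa using hlin) (List.forall₂_map_left_iff.1 hargs)
    exact ⟨W, by simpa only [occurs_fn_iff], hasType_fn_iff.2 ⟨d, σt, hd, rfl, hargsW⟩⟩

end

theorem update_of_hasType_subst_general (Sg : Signature) (e : Expr)
    (σd : ℕ → Expr)
    (hlin : ∀ x : ℕ, σd x ≠ Expr.var x → Expr.varCount x e ≤ 1)
    (V : Env) (τ' : Ty) (ht : HasType Sg V (e.subst σd) τ') :
    ∃ W : Env,
      (∀ x : ℕ, Expr.Occurs x e → σd x ≠ Expr.var x →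
          ∃ τx : Ty, W x = some τx ∧ HasType Sg V (σd x) τx) ∧
      (∀ x : ℕ, ¬ (Expr.Occurs x e ∧ σd x ≠ Expr.var x) → W x = V x) ∧
      HasType Sg W e τ' := by
  obtain ⟨W, ⟨hmoved, hfixed⟩, hW⟩ := exists_isSubstUpdate_of_hasType_subst e τ' hlin ht
  exact ⟨W, hmoved, hfixed, hW⟩

/-- Lemma 4.7: let `{x₁,…,x_m} = {x ∈ dvar(e) | xσd ≠ x}` with
`xᵢσd = t'ᵢ`, each `xᵢ` occurring at most once in `e`, and assume
`eσd ∈ Expr^{τ'}_{Σ⊥}(V)`.  Then there are types `τ'ᵢ` with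
`t'ᵢ ∈ Term^{τ'ᵢ}_{Σ⊥}(V)` and `V[x₁:τ'₁,…,x_m:τ'_m] ⊢ e : τ'`
(the updated environment is the `W` below). -/
theorem update_of_hasType_subst (Sg : Signature) (e : Expr)
    (σd : ℕ → Expr) (hσd : TermSub σd)
    (hlin : ∀ x : ℕ, σd x ≠ Expr.var x → Expr.varCount x e ≤ 1)
    (V : Env) (τ' : Ty) (ht : HasType Sg V (e.subst σd) τ') :
    ∃ W : Env,
      (∀ x : ℕ, Expr.Occurs x e → σd x ≠ Expr.var x →
          ∃ τx : Ty, W x = some τx ∧ HasType Sg V (σd x) τx) ∧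
      (∀ x : ℕ, ¬ (Expr.Occurs x e ∧ σd x ≠ Expr.var x) → W x = V x) ∧
      HasType Sg W e τ' :=
  update_of_hasType_subst_general Sg e σd hlin V τ' ht

end ACRWL
end

section
/- Let f(t₁,…,tₙ) → r ⇐ C' be a well-typed regular defining rule for a function symbol with principal type f : (τ₁,…,τₙ) → τ ∈ FS. Let V be an environment and (σ_t, σ_d) a substitution consisting of a type substitution σ_t and a partial data substitution σ_d. If tᵢσ_d ∈ Term^{τᵢσ_t}_{Σ⊥}(V) for all 1 ≤ i ≤ n, then rσ_d ∈ Expr^{τσ_t}_{Σ⊥}(V). -/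
namespace ACRWL

/-- A defining rule `f(t₁,…,tₙ) → r ⇐ a₁ == b₁, …, a_m == b_m`. -/
structure Rule : Type where
  fname : ℕ
  lhs : List Expr
  rhs : Expr
  conds : List (Expr × Expr)

/-- Application of a data substitution to a defining rule. -/
def Rule.subst (σ : ℕ → Expr) (ρ : Rule) : Rule :=
  ⟨ρ.fname, ρ.lhs.map (Expr.subst σ), ρ.rhs.subst σ,
    ρ.conds.map fun p => (p.1.subst σ, p.2.subst σ)⟩

/-- A linear tuple of terms: no variable occurs more than once in the tuple. -/
def Linear (ts : List Expr) : Prop := ∀ x : ℕ, (ts.map (Expr.varCount x)).sum ≤ 1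

/-- Well-formed defining rule: linear left-hand side made of total data
terms; total right-hand side and conditions. -/
def WfRule (ρ : Rule) : Prop :=
  Linear ρ.lhs ∧ (∀ t ∈ ρ.lhs, Expr.IsTotalTerm t) ∧ ρ.rhs.NoBot ∧
  ∀ p ∈ ρ.conds, p.1.NoBot ∧ p.2.NoBot

/-- A program: a finite set of equational axioms for constructors together
with a finite set of defining rules for functions. -/
structure Program : Type where
  C : Axioms
  R : Set Rule
  wfC : WfAxioms C
  finR : R.Finite
  wfR : ∀ ρ ∈ R, WfRule ρ

/-- `[R]_→` : all instances of rules of the program under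
partial data substitutions. -/
def RInstances (P : Program) : Set Rule :=
  { ρ' | ∃ ρ ∈ P.R, ∃ σ : ℕ → Expr, TermSub σ ∧ ρ' = ρ.subst σ }

/-- Statements derived by the rewriting calculi: reduction/approximation
statements `e → e'` and joinability statements `e == e'`. -/
inductive Stm : Type where
  | red : Expr → Expr → Stm
  | join : Expr → Expr → Stm

/-- The Basic Rewriting Calculus (BRC) of a program. -/
inductive BRC (P : Program) : Stm → Prop where
  | bot (e : Expr) : BRC P (Stm.red e Expr.bot)
  | refl (e : Expr) : BRC P (Stm.red e e)
  | trans {e e' e'' : Expr} :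
      BRC P (Stm.red e e') → BRC P (Stm.red e' e'') → BRC P (Stm.red e e'')
  | monoCon {c : ℕ} {es es' : List Expr} : es.length = es'.length →
      (∀ p ∈ es.zip es', BRC P (Stm.red p.1 p.2)) →
      BRC P (Stm.red (Expr.con c es) (Expr.con c es'))
  | monoFn {f : ℕ} {es es' : List Expr} : es.length = es'.length →
      (∀ p ∈ es.zip es', BRC P (Stm.red p.1 p.2)) →
      BRC P (Stm.red (Expr.fn f es) (Expr.fn f es'))
  | rule {ρ : Rule} : ρ ∈ RInstances P →
      (∀ p ∈ ρ.conds, BRC P (Stm.join p.1 p.2)) →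
      BRC P (Stm.red (Expr.fn ρ.fname ρ.lhs) ρ.rhs)
  | mut {s t : Expr} : (s, t) ∈ CInstances P.C → BRC P (Stm.red s t)
  | join {e e' t : Expr} : t.IsTotalTerm →
      BRC P (Stm.red e t) → BRC P (Stm.red e' t) → BRC P (Stm.join e e')

/-- The Goal-Oriented Rewriting Calculus (GORC) of a program. -/
inductive GORC (P : Program) : Stm → Prop where
  | bot (e : Expr) : GORC P (Stm.red e Expr.bot)
  | rrefl (x : ℕ) : GORC P (Stm.red (Expr.var x) (Expr.var x))
  | dc {c : ℕ} {es ts : List Expr} : es.length = ts.length →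
      (∀ p ∈ es.zip ts, GORC P (Stm.red p.1 p.2)) →
      GORC P (Stm.red (Expr.con c es) (Expr.con c ts))
  | omut {c : ℕ} {es ts : List Expr} {s t : Expr} : t ≠ Expr.bot →
      (Expr.con c ts, s) ∈ CInstances P.C → es.length = ts.length →
      (∀ p ∈ es.zip ts, GORC P (Stm.red p.1 p.2)) →
      GORC P (Stm.red s t) → GORC P (Stm.red (Expr.con c es) t)
  | orule {es : List Expr} {ρ : Rule} {t : Expr} : t ≠ Expr.bot →
      ρ ∈ RInstances P → es.length = ρ.lhs.length →
      (∀ p ∈ es.zip ρ.lhs, GORC P (Stm.red p.1 p.2)) →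
      (∀ p ∈ ρ.conds, GORC P (Stm.join p.1 p.2)) →
      GORC P (Stm.red ρ.rhs t) → GORC P (Stm.red (Expr.fn ρ.fname es) t)
  | join {e e' t : Expr} : t.IsTotalTerm →
      GORC P (Stm.red e t) → GORC P (Stm.red e' t) → GORC P (Stm.join e e')

end ACRWL

namespace ACRWL

/-- A regular defining rule: every variable of the right-hand side occurs in
the left-hand side. -/
def RegularRule (ρ : Rule) : Prop :=
  ∀ x : ℕ, Expr.Occurs x ρ.rhs → ∃ t ∈ ρ.lhs, Expr.Occurs x t

/-- A well-typed (regular) defining rule for `f : (τ₁,…,τₙ) → τ`: in some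
environment the left-hand side arguments have the declared argument types,
the right-hand side has the declared result type, and the two sides of every
condition share a type. -/
def WellTypedRule (Sg : Signature) (ρ : Rule) : Prop :=
  ∃ d : Decl, Sg.fs ρ.fname = some d ∧ ρ.lhs.length = d.args.length ∧
    ∃ V : Env,
      (∀ p ∈ ρ.lhs.zip d.args, HasType Sg V p.1 p.2) ∧
      HasType Sg V ρ.rhs d.res ∧
      ∀ p ∈ ρ.conds, ∃ τ : Ty, HasType Sg V p.1 τ ∧ HasType Sg V p.2 τ

/-- A well-typed strongly regular equational axiom
`c(t₁,…,tₙ) ≈ d(s₁,…,s_m)`: the principal types of `c` and `d` admit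
variants with a common result type `τ` such that both sides have type `τ`
in some environment. -/
def WellTypedAxiom (Sg : Signature) (p : Expr × Expr) : Prop :=
  ∃ (c : ℕ) (ts : List Expr) (d : ℕ) (ss : List Expr)
      (τs τs' : List Ty) (τ : Ty),
    p.1 = Expr.con c ts ∧ p.2 = Expr.con d ss ∧
    (∃ D, Sg.dc c = some D ∧ IsVariant D ⟨τs, τ⟩) ∧
    (∃ D, Sg.dc d = some D ∧ IsVariant D ⟨τs', τ⟩) ∧
    ∃ V : Env, HasType Sg V p.1 τ ∧ HasType Sg V p.2 τ

/-- A well-typed strongly regular program. -/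
def WellTypedProgram (Sg : Signature) (P : Program) : Prop :=
  StronglyRegular P.C ∧
  (∀ p ∈ P.C, WellTypedAxiom Sg p) ∧
  (∀ ρ ∈ P.R, RegularRule ρ ∧ WellTypedRule Sg ρ)

end ACRWL

namespace ACRWL

/- ### Auxiliary lemmas -/

@[simp] lemma Ty.subst_tvar (σ : ℕ → Ty) (α : ℕ) : Ty.subst σ (Ty.tvar α) = σ α := by
  rw [Ty.subst]

@[simp] lemma Ty.subst_tcon_s10 (σ : ℕ → Ty) (K : ℕ) (τs : List Ty) :
    Ty.subst σ (Ty.tcon K τs) = Ty.tcon K (τs.map (Ty.subst σ)) := by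
  rw [Ty.subst]; simp

lemma Ty.subst_subst_s10 (σ ρ : ℕ → Ty) (τ : Ty) :
    Ty.subst σ (Ty.subst ρ τ) = Ty.subst (fun α => Ty.subst σ (ρ α)) τ := by
  match τ with
  | .tvar α => simp
  | .tcon K τs =>
    simp only [Ty.subst_tcon_s10, List.map_map]
    congr 1
    apply List.map_congr_left
    intro τ' hτ'
    exact Ty.subst_subst_s10 σ ρ τ'
termination_by sizeOf τ
decreasing_by have := List.sizeOf_lt_of_mem hτ'; simp; omega

lemma Ty.subst_congr_s10 {ρ₁ ρ₂ : ℕ → Ty} {τ : Ty} (h : ∀ α, Ty.OccursT α τ → ρ₁ α = ρ₂ α) :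
    Ty.subst ρ₁ τ = Ty.subst ρ₂ τ := by
  match τ with
  | .tvar α => simpa using h α .tvar
  | .tcon K τs =>
    simp only [Ty.subst_tcon_s10]
    congr 1
    apply List.map_congr_left
    intro τ' hτ'
    exact Ty.subst_congr_s10 (fun α hα => h α (.tcon hτ' hα))
termination_by sizeOf τ
decreasing_by have := List.sizeOf_lt_of_mem hτ'; simp; omega

lemma Ty.occurs_of_subst_eq {ρ₁ ρ₂ : ℕ → Ty} {τ : Ty}
    (h : Ty.subst ρ₁ τ = Ty.subst ρ₂ τ) : ∀ α, Ty.OccursT α τ → ρ₁ α = ρ₂ α := by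
  intro α hα
  induction hα with
  | tvar => simpa using h
  | @tcon K τs τ' hmem _ ih =>
    apply ih
    simp only [Ty.subst_tcon_s10, Ty.tcon.injEq, true_and] at h
    obtain ⟨i, hi, rfl⟩ := List.mem_iff_getElem.mp hmem
    have := congrArg (fun l => l[i]?) h
    simpa [List.getElem?_map, List.getElem?_eq_getElem hi] using this

@[simp] lemma Expr.subst_var_s10 (σ : ℕ → Expr) (x : ℕ) : Expr.subst σ (Expr.var x) = σ x := by
  rw [Expr.subst]

@[simp] lemma Expr.subst_bot (σ : ℕ → Expr) : Expr.subst σ Expr.bot = Expr.bot := by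
  rw [Expr.subst]

@[simp] lemma Expr.subst_con_s10 (σ : ℕ → Expr) (c : ℕ) (es : List Expr) :
    Expr.subst σ (Expr.con c es) = Expr.con c (es.map (Expr.subst σ)) := by
  rw [Expr.subst]; simp

@[simp] lemma Expr.subst_fn_s10 (σ : ℕ → Expr) (f : ℕ) (es : List Expr) :
    Expr.subst σ (Expr.fn f es) = Expr.fn f (es.map (Expr.subst σ)) := by
  rw [Expr.subst]; simp

/-- Key inversion lemma: if a data term `t` has type `τ₀` in `V₀` and its
instance `tσd` has type `τ₀σt` in `V`, then every variable `x` of `t` with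
`V₀ x = τx` satisfies `V ⊢ σd x : τx σt`. -/
lemma key_lemma (Sg : Signature) (V₀ : Env) {t : Expr} {τ₀ : Ty}
    (h : HasType Sg V₀ t τ₀) :
    ∀ (V : Env) (σt : ℕ → Ty) (σd : ℕ → Expr), t.IsTerm →
      HasType Sg V (t.subst σd) (τ₀.subst σt) →
      ∀ x τx, Expr.Occurs x t → V₀ x = some τx →
        HasType Sg V (σd x) (τx.subst σt) := by
  induction h with
  | @var x τ hx =>
    intro V σt σd _ hinst y τy hocc hy
    cases hocc
    rw [hx] at hy
    cases hy
    simpa using hinst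
  | bot τ =>
    intro V σt σd _ _ y τy hocc _
    cases hocc
  | @fn f es d σt0 _ _ _ _ =>
    intro V σt σd hterm
    cases hterm
  | @con c es D σt0 hdc hlen hargs ih =>
    intro V σt σd hterm hinst x τx hocc hx
    cases hterm with
    | con hts =>
      rw [Expr.subst_con_s10] at hinst
      generalize hres : Ty.subst σt (Ty.subst σt0 D.res) = τI at hinst
      cases hinst with
      | @con _ _ D' ρ₁ hdc' hlen' hargs' =>
        rw [hdc] at hdc'
        cases hdc'
        have heq' : Ty.subst ρ₁ D.res = Ty.subst (fun α => Ty.subst σt (σt0 α)) D.res := by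
          rw [← hres, Ty.subst_subst_s10]
        have hagree := Ty.occurs_of_subst_eq heq'
        cases hocc with
        | @con _ _ e hmem hocce =>
          obtain ⟨i, hi, rfl⟩ := List.mem_iff_getElem.mp hmem
          have hi' : i < (es.zip D.args).length := by simp [hlen]; omega
          have hpmem : (es[i], D.args[i]'(by omega)) ∈ es.zip D.args := by
            have := List.getElem_mem hi'
            rwa [List.getElem_zip] at this
          have hi'' : i < ((es.map (Expr.subst σd)).zip D.args).length := by
            simp [hlen]; omega
          have hpmem' : ((es.map (Expr.subst σd))[i]'(by simpa using hi),
              D.args[i]'(by omega)) ∈ (es.map (Expr.subst σd)).zip D.args := by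
            have := List.getElem_mem hi''
            rwa [List.getElem_zip] at this
          have hinst_i := hargs' _ hpmem'
          simp only [List.getElem_map] at hinst_i
          have htyeq : Ty.subst ρ₁ (D.args[i]'(by omega)) =
              Ty.subst σt (Ty.subst σt0 (D.args[i]'(by omega))) := by
            rw [Ty.subst_subst_s10]
            apply Ty.subst_congr_s10
            intro α hα
            exact hagree α (Sg.dc_trans c D hdc α ⟨_, List.getElem_mem (by omega), hα⟩)
          rw [htyeq] at hinst_i
          exact ih _ hpmem V σt σd (hts _ (List.getElem_mem hi)) hinst_i x τx hocce hx

/-- Substitution lemma: if `r` has type `τ` in `V₀` and every variable of `r`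
is mapped by `σd` to an expression of the `σt`-instance of its declared type
in `V`, then `rσd` has type `τσt` in `V`. -/
lemma subst_lemma (Sg : Signature) (V₀ : Env) {r : Expr} {τ : Ty}
    (h : HasType Sg V₀ r τ) :
    ∀ (V : Env) (σt : ℕ → Ty) (σd : ℕ → Expr),
      (∀ x τx, Expr.Occurs x r → V₀ x = some τx → HasType Sg V (σd x) (τx.subst σt)) →
      HasType Sg V (r.subst σd) (τ.subst σt) := by
  induction h with
  | @var x τ hx =>
    intro V σt σd hv
    rw [Expr.subst_var_s10]
    exact hv x τ .var hx
  | bot τ =>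
    intro V σt σd _
    rw [Expr.subst_bot]
    exact .bot _
  | @con c es D σt0 hdc hlen hargs ih =>
    intro V σt σd hv
    rw [Expr.subst_con_s10, Ty.subst_subst_s10]
    refine HasType.con hdc (by simpa using hlen) ?_
    intro p hp
    obtain ⟨i, hi, rfl⟩ := List.mem_iff_getElem.mp hp
    rw [List.getElem_zip]
    simp only [List.getElem_map]
    have hi1 : i < es.length := by simp at hi; omega
    have hpmem : (es[i], D.args[i]'(by simp at hi; omega)) ∈ es.zip D.args := by
      have hi' : i < (es.zip D.args).length := by simp at hi ⊢; omega
      have := List.getElem_mem hi'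
      rwa [List.getElem_zip] at this
    have := ih _ hpmem V σt σd
      (fun x τx hocc hx => hv x τx (.con (List.getElem_mem hi1) hocc) hx)
    rwa [Ty.subst_subst_s10] at this
  | @fn f es D σt0 hfs hlen hargs ih =>
    intro V σt σd hv
    rw [Expr.subst_fn_s10, Ty.subst_subst_s10]
    refine HasType.fn hfs (by simpa using hlen) ?_
    intro p hp
    obtain ⟨i, hi, rfl⟩ := List.mem_iff_getElem.mp hp
    rw [List.getElem_zip]
    simp only [List.getElem_map]
    have hi1 : i < es.length := by simp at hi; omega
    have hpmem : (es[i], D.args[i]'(by simp at hi; omega)) ∈ es.zip D.args := by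
      have hi' : i < (es.zip D.args).length := by simp at hi ⊢; omega
      have := List.getElem_mem hi'
      rwa [List.getElem_zip] at this
    have := ih _ hpmem V σt σd
      (fun x τx hocc hx => hv x τx (.fn (List.getElem_mem hi1) hocc) hx)
    rwa [Ty.subst_subst_s10] at this

/-- Lemma 4.8 (a) (type preservation by instances): let
`f(t₁,…,tₙ) → r ⇐ C'` be a well-typed regular defining rule for the function
symbol with declared principal type `f : (τ₁,…,τₙ) → τ`.  If
`tᵢσd ∈ Term^{τᵢσt}_{Σ⊥}(V)` for all `i`, then
`rσd ∈ Expr^{τσt}_{Σ⊥}(V)`. -/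
theorem rule_type_preservation (Sg : Signature) (ρ : Rule)
    (hwf : WfRule ρ) (hreg : RegularRule ρ) (hwt : WellTypedRule Sg ρ)
    (d : Decl) (hd : Sg.fs ρ.fname = some d) (hlen : ρ.lhs.length = d.args.length)
    (V : Env) (σt : ℕ → Ty) (σd : ℕ → Expr) (hσd : TermSub σd)
    (hargs : ∀ p ∈ ρ.lhs.zip d.args,
        Expr.IsTerm (Expr.subst σd p.1) ∧
        HasType Sg V (Expr.subst σd p.1) (Ty.subst σt p.2)) :
    HasType Sg V (Expr.subst σd ρ.rhs) (Ty.subst σt d.res) := by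
  obtain ⟨d', hd', hlen', V₀, hargs₀, hrhs, -⟩ := hwt
  rw [hd] at hd'
  cases hd'
  apply subst_lemma Sg V₀ hrhs V σt σd
  intro x τx hocc hx
  obtain ⟨t, ht, hocct⟩ := hreg x hocc
  obtain ⟨i, hi, rfl⟩ := List.mem_iff_getElem.mp ht
  have hpmem : (ρ.lhs[i], d.args[i]'(by omega)) ∈ ρ.lhs.zip d.args := by
    have hi' : i < (ρ.lhs.zip d.args).length := by simp [hlen]; omega
    have := List.getElem_mem hi'
    rwa [List.getElem_zip] at this
  have hterm : (ρ.lhs[i]).IsTerm := (hwf.2.1 _ (List.getElem_mem hi)).1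
  exact key_lemma Sg V₀ (hargs₀ _ hpmem) V σt σd hterm
    (hargs _ hpmem).2 x τx hocct hx

end ACRWL
end
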